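/- arXiv:2209.04001 — 2 statements merged into one kernel-verified Lean document; each statement's English description precedes it below -/
import Mathlib

section
/- Fix T > 0 and a continuous, strictly increasing function ζ : [0,T] → ℝ. For a continuous function f : [0,T] → ℝ define the running minimum m_f(t) = inf_{s ∈ [0,t]} f(s) and the endogenous burst time τ̄(f) = inf{ t ∈ [0,T] : m_f(t) ≤ ζ(t) } ∧ T, with the convention that τ̄(f) = T when the set { t ∈ [0,T] : m_f(t) ≤ ζ(t) } is empty. Then τ̄ is sequentially continuous on C([0,T],ℝ) with respect to the supremum norm: whenever f_n → f uniformly on [0,T], one has τ̄(f_n) → τ̄(f). -/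
/-- The running minimum `m_f(t) = inf_{s ∈ [0,t]} f(s)`. -/
noncomputable def runMin (f : ℝ → ℝ) (t : ℝ) : ℝ := sInf (f '' Set.Icc 0 t)

open Classical in
/-- The endogenous burst time `τ̄(f) = inf{t ∈ [0,T] : m_f(t) ≤ ζ(t)} ∧ T`,
with the convention that it equals `T` when the set is empty. -/
noncomputable def burstTime (T : ℝ) (ζ : ℝ → ℝ) (f : ℝ → ℝ) : ℝ :=
  if ({t : ℝ | t ∈ Set.Icc 0 T ∧ runMin f t ≤ ζ t}).Nonempty then
    min (sInf {t : ℝ | t ∈ Set.Icc 0 T ∧ runMin f t ≤ ζ t}) T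
  else T

/-!
Uniform convergence `f n → g` on `[0,T]` makes the running minima converge uniformly on `[0,T]`.
If `τ̄(g) < c`, some `s < c` has `m_g(s) ≤ ζ(s)`, so strict monotonicity gives the strict inequality
`m_g(c) < ζ(c)`, which persists for `f n` with `n` large: `τ̄(f n) ≤ c`. If `c < τ̄(g)`, then
`ζ(c) < m_g(c)`; a burst of `f n` at some `s < c` would give `m_g(c) ≤ m_g(s) ≈ m_{f n}(s) ≤ ζ(s) ≤ ζ(c)`,
impossible once the gap `m_g(c) - ζ(c)` exceeds the uniform error: `c ≤ τ̄(f n)`.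
-/

open Set Filter

section RunMin

variable {f g : ℝ → ℝ} {s t T δ : ℝ}

lemma runMin_le (hf : BddBelow (f '' Icc 0 t)) (hs : s ∈ Icc 0 t) : runMin f t ≤ f s :=
  csInf_le hf (mem_image_of_mem f hs)

lemma antitoneOn_runMin (hf : BddBelow (f '' Icc 0 T)) : AntitoneOn (runMin f) (Icc 0 T) :=
  fun _ hs _ ht hst => csInf_le_csInf (hf.mono (image_mono (Icc_subset_Icc_right ht.2)))
    ⟨f 0, 0, left_mem_Icc.2 hs.1, rfl⟩ (image_mono (Icc_subset_Icc_right hst))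

lemma runMin_le_runMin_add (hf : BddBelow (f '' Icc 0 t)) (ht : 0 ≤ t)
    (h : ∀ s ∈ Icc 0 t, f s ≤ g s + δ) : runMin f t ≤ runMin g t + δ := by
  suffices runMin f t - δ ≤ runMin g t by linarith
  refine le_csInf ⟨g 0, 0, left_mem_Icc.2 ht, rfl⟩ ?_
  rintro _ ⟨s, hs, rfl⟩
  linarith [runMin_le hf hs, h s hs]

lemma abs_runMin_sub_runMin_le (hg : BddBelow (g '' Icc 0 t)) (ht : 0 ≤ t)
    (h : ∀ s ∈ Icc 0 t, |f s - g s| ≤ δ) : |runMin f t - runMin g t| ≤ δ := by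
  obtain ⟨b, hb⟩ := hg
  have hf : BddBelow (f '' Icc 0 t) := by
    refine ⟨b - δ, ?_⟩
    rintro _ ⟨s, hs, rfl⟩
    linarith [hb (mem_image_of_mem g hs), (abs_le.1 (h s hs)).1]
  have hfg : runMin f t ≤ runMin g t + δ :=
    runMin_le_runMin_add hf ht fun s hs => by linarith [(abs_le.1 (h s hs)).2]
  have hgf : runMin g t ≤ runMin f t + δ :=
    runMin_le_runMin_add ⟨b, hb⟩ ht fun s hs => by linarith [(abs_le.1 (h s hs)).1]
  exact abs_sub_le_iff.2 ⟨by linarith, by linarith⟩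

lemma TendstoUniformlyOn.runMin {ι : Type*} {l : Filter ι} {F : ι → ℝ → ℝ}
    (hg : BddBelow (g '' Icc 0 T)) (h : TendstoUniformlyOn F g l (Icc 0 T)) :
    TendstoUniformlyOn (fun i => runMin (F i)) (runMin g) l (Icc 0 T) := by
  rw [Metric.tendstoUniformlyOn_iff] at h ⊢
  intro ε hε
  filter_upwards [h (ε / 2) (half_pos hε)] with i hi t ht
  have hsub : Icc 0 t ⊆ Icc 0 T := Icc_subset_Icc_right ht.2
  rw [Real.dist_eq, abs_sub_comm]
  refine (abs_runMin_sub_runMin_le (hg.mono (image_mono hsub)) ht.1 fun s hs => ?_).trans_lt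
    (half_lt_self hε)
  rw [← Real.dist_eq, dist_comm]
  exact (hi s (hsub hs)).le

end RunMin

section BurstTime

variable {T : ℝ} {ζ f : ℝ → ℝ} {t : ℝ}

lemma burstTime_le : burstTime T ζ f ≤ T := by
  unfold burstTime
  split_ifs
  exacts [min_le_right _ _, le_rfl]

lemma burstTime_le_of_mem (ht : t ∈ Icc 0 T) (hζ : runMin f t ≤ ζ t) : burstTime T ζ f ≤ t := by
  have hS : t ∈ {t | t ∈ Icc 0 T ∧ runMin f t ≤ ζ t} := ⟨ht, hζ⟩
  unfold burstTime
  rw [if_pos ⟨t, hS⟩]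
  exact (min_le_left _ _).trans (csInf_le ⟨0, fun s hs => hs.1.1⟩ hS)

lemma exists_lt_of_burstTime_lt (htT : t ≤ T) (h : burstTime T ζ f < t) :
    ∃ s ∈ Icc 0 T, runMin f s ≤ ζ s ∧ s < t := by
  unfold burstTime at h
  split_ifs at h with hne
  · obtain ⟨s, hs, hst⟩ := exists_lt_of_csInf_lt hne ((min_lt_iff.1 h).resolve_right htT.not_gt)
    exact ⟨s, hs.1, hs.2, hst⟩
  · exact absurd h htT.not_gt

lemma le_burstTime (htT : t ≤ T) (h : ∀ s ∈ Icc 0 T, runMin f s ≤ ζ s → t ≤ s) :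
    t ≤ burstTime T ζ f := by
  by_contra! hlt
  obtain ⟨s, hs, hsζ, hst⟩ := exists_lt_of_burstTime_lt htT hlt
  exact (h s hs hsζ).not_gt hst

end BurstTime

section Convergence

variable {T c : ℝ} {ζ g : ℝ → ℝ} {ι : Type*} {l : Filter ι} {F : ι → ℝ → ℝ}

lemma eventually_burstTime_le (hζ : StrictMonoOn ζ (Icc 0 T)) (hg : BddBelow (g '' Icc 0 T))
    (hM : TendstoUniformlyOn (fun i => runMin (F i)) (runMin g) l (Icc 0 T))
    (hc : burstTime T ζ g < c) : ∀ᶠ i in l, burstTime T ζ (F i) ≤ c := by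
  rcases lt_or_ge T c with hTc | hcT
  · exact Eventually.of_forall fun i => burstTime_le.trans hTc.le
  obtain ⟨s, hs, hsζ, hsc⟩ := exists_lt_of_burstTime_lt hcT hc
  have hcI : c ∈ Icc 0 T := ⟨hs.1.trans hsc.le, hcT⟩
  have hgap : runMin g c < ζ c :=
    calc runMin g c ≤ runMin g s := antitoneOn_runMin hg hs hcI hsc.le
      _ ≤ ζ s := hsζ
      _ < ζ c := hζ hs hcI hsc
  filter_upwards [Metric.tendstoUniformlyOn_iff.1 hM _ (sub_pos.2 hgap)] with i hi
  refine burstTime_le_of_mem hcI ?_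
  have := hi c hcI
  rw [Real.dist_eq, abs_lt] at this
  linarith [this.1]

lemma eventually_le_burstTime (hζ : MonotoneOn ζ (Icc 0 T)) (hg : BddBelow (g '' Icc 0 T))
    (hM : TendstoUniformlyOn (fun i => runMin (F i)) (runMin g) l (Icc 0 T))
    (hc : c < burstTime T ζ g) : ∀ᶠ i in l, c ≤ burstTime T ζ (F i) := by
  have hcT : c ≤ T := hc.le.trans burstTime_le
  rcases lt_or_ge c 0 with hc0 | hc0
  · exact Eventually.of_forall fun i => le_burstTime hcT fun s hs _ => hc0.le.trans hs.1
  have hcI : c ∈ Icc 0 T := ⟨hc0, hcT⟩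
  have hgap : ζ c < runMin g c := lt_of_not_ge fun h => hc.not_ge (burstTime_le_of_mem hcI h)
  filter_upwards [Metric.tendstoUniformlyOn_iff.1 hM _ (sub_pos.2 hgap)] with i hi
  refine le_burstTime hcT fun s hs hsζ => le_of_not_gt fun hsc => ?_
  have hclose := hi s hs
  rw [Real.dist_eq, abs_lt] at hclose
  linarith [antitoneOn_runMin hg hs hcI hsc.le, hζ hs hcI hsc.le, hclose.2]

end Convergence

theorem stmt1_general (T : ℝ) (ζ : ℝ → ℝ)
    (hζm : StrictMonoOn ζ (Set.Icc 0 T))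
    (f : ℕ → ℝ → ℝ) (g : ℝ → ℝ)
    (hg : ContinuousOn g (Set.Icc 0 T))
    (hconv : TendstoUniformlyOn f g Filter.atTop (Set.Icc 0 T)) :
    Filter.Tendsto (fun n => burstTime T ζ (f n)) Filter.atTop (nhds (burstTime T ζ g)) := by
  have hgb : BddBelow (g '' Icc 0 T) := (isCompact_Icc.image_of_continuousOn hg).bddBelow
  have hM := hconv.runMin hgb
  refine tendsto_order.2 ⟨fun a ha => ?_, fun b hb => ?_⟩
  · obtain ⟨c, hac, hcτ⟩ := exists_between ha
    filter_upwards [eventually_le_burstTime hζm.monotoneOn hgb hM hcτ] with n hn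
    exact hac.trans_le hn
  · obtain ⟨c, hτc, hcb⟩ := exists_between hb
    filter_upwards [eventually_burstTime_le hζm hgb hM hτc] with n hn
    exact hn.trans_lt hcb

/-- If the threshold `ζ` is continuous and strictly increasing on `[0,T]`, the endogenous
burst time functional is sequentially continuous for uniform convergence on `[0,T]`. -/
theorem stmt1 (T : ℝ) (hT : 0 < T) (ζ : ℝ → ℝ)
    (hζc : ContinuousOn ζ (Set.Icc 0 T)) (hζm : StrictMonoOn ζ (Set.Icc 0 T))
    (f : ℕ → ℝ → ℝ) (g : ℝ → ℝ)
    (hf : ∀ n, ContinuousOn (f n) (Set.Icc 0 T)) (hg : ContinuousOn g (Set.Icc 0 T))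
    (hconv : TendstoUniformlyOn f g Filter.atTop (Set.Icc 0 T)) :
    Filter.Tendsto (fun n => burstTime T ζ (f n)) Filter.atTop (nhds (burstTime T ζ g)) :=
  stmt1_general T ζ hζm f g hg hconv
end

section
/- Take T = 2 and constant threshold ζ ≡ 0. Define m : [0,2] → ℝ by m(t) = (1−t) for t ∈ [0,1] and m(t) = 0 for t ∈ (1,2], and for each n ≥ 1 define m^n : [0,2] → ℝ by m^n(t) = m(t) for t ∈ [0, 1 − 1/n] and m^n(t) = (2 − t)/(n+1) for t ∈ (1 − 1/n, 2]. Then each m^n is continuous and non-increasing, m^n converges uniformly to m on [0,2]; moreover, with τ̄(f) = inf{ t ∈ [0,2] : inf_{s ∈ [0,t]} f(s) ≤ 0 } ∧ 2, one has τ̄(m^n) = 2 for every n while τ̄(m) = 1. In particular, the endogenous burst time functional with a constant (not strictly increasing) threshold is not sequentially continuous with respect to uniform convergence. -/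
open Classical in
/-- The endogenous burst time on `[0,2]` with constant threshold `ζ ≡ 0`:
`τ̄(f) = inf{t ∈ [0,2] : inf_{s ∈ [0,t]} f(s) ≤ 0} ∧ 2` (with value `2` if the set is empty). -/
noncomputable def burstTime0 (f : ℝ → ℝ) : ℝ :=
  if ({t : ℝ | t ∈ Set.Icc 0 2 ∧ runMin f t ≤ 0}).Nonempty then
    min (sInf {t : ℝ | t ∈ Set.Icc 0 2 ∧ runMin f t ≤ 0}) 2
  else 2

/-- `m(t) = (1−t) 1_{[0,1]}(t)`. -/
noncomputable def mLim : ℝ → ℝ := fun t => if t ≤ 1 then 1 - t else 0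

/-- `mᶰ(t) = m(t)` on `[0, 1 − 1/n]` and `mᶰ(t) = (2 − t)/(n+1)` on `(1 − 1/n, 2]`. -/
noncomputable def mSeq (n : ℕ) : ℝ → ℝ := fun t =>
  if t ≤ 1 - 1 / (n : ℝ) then 1 - t else (2 - t) / ((n : ℝ) + 1)

lemma mSeq_eq_max (n : ℕ) (hn : 1 ≤ n) (t : ℝ) :
    mSeq n t = max (1 - t) ((2 - t) / ((n : ℝ) + 1)) := by
  have hn' : (1:ℝ) ≤ (n:ℝ) := by exact_mod_cast hn
  have hp : (0:ℝ) < (n:ℝ) := by linarith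
  have hp1 : (0:ℝ) < (n:ℝ) + 1 := by linarith
  have e : (1/(n:ℝ)) * n = 1 := by field_simp
  unfold mSeq
  split_ifs with h
  · symm; apply max_eq_left
    rw [div_le_iff₀ hp1]
    nlinarith [mul_le_mul_of_nonneg_right h hp.le]
  · push_neg at h
    symm; apply max_eq_right
    rw [le_div_iff₀ hp1]
    nlinarith [mul_le_mul_of_nonneg_right h.le hp.le]

lemma runMin_mSeq_pos (n : ℕ) (hn : 1 ≤ n) {t : ℝ} (h0 : 0 ≤ t) (h2 : t < 2) :
    0 < runMin (mSeq n) t := by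
  have hp1 : (0:ℝ) < (n:ℝ) + 1 := by positivity
  have hc : 0 < (2 - t)/((n:ℝ)+1) := div_pos (by linarith) hp1
  refine lt_of_lt_of_le hc (le_csInf ⟨mSeq n 0, ⟨0, ⟨le_rfl, h0⟩, rfl⟩⟩ ?_)
  rintro y ⟨s, ⟨hs0, hst⟩, rfl⟩
  rw [mSeq_eq_max n hn]
  refine le_trans ?_ (le_max_right _ _)
  gcongr

lemma runMin_mSeq_two (n : ℕ) (hn : 1 ≤ n) : runMin (mSeq n) 2 ≤ 0 := by
  have h2 : mSeq n 2 = 0 := by rw [mSeq_eq_max n hn]; norm_num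
  have hbdd : BddBelow (mSeq n '' Set.Icc 0 2) := by
    refine ⟨0, ?_⟩
    rintro y ⟨s, ⟨hs0, hs2⟩, rfl⟩
    rw [mSeq_eq_max n hn]
    have : (0:ℝ) ≤ (2-s)/((n:ℝ)+1) := div_nonneg (by linarith) (by positivity)
    exact le_trans this (le_max_right _ _)
  exact le_trans (csInf_le hbdd ⟨2, ⟨by norm_num, le_rfl⟩, rfl⟩) h2.le

lemma runMin_mLim_pos {t : ℝ} (h0 : 0 ≤ t) (h1 : t < 1) : 0 < runMin mLim t := by
  refine lt_of_lt_of_le (show (0:ℝ) < 1 - t by linarith)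
    (le_csInf ⟨mLim 0, ⟨0, ⟨le_rfl, h0⟩, rfl⟩⟩ ?_)
  rintro y ⟨s, ⟨hs0, hst⟩, rfl⟩
  unfold mLim
  rw [if_pos (by linarith : s ≤ 1)]
  linarith

lemma runMin_mLim_le {t : ℝ} (h1 : 1 ≤ t) : runMin mLim t ≤ 0 := by
  have hm1 : mLim 1 = 0 := by unfold mLim; norm_num
  have hbdd : BddBelow (mLim '' Set.Icc 0 t) := by
    refine ⟨0, ?_⟩
    rintro y ⟨s, _, rfl⟩
    unfold mLim
    split_ifs with h
    · linarith
    · exact le_rfl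
  exact le_trans (csInf_le hbdd ⟨1, ⟨by norm_num, h1⟩, rfl⟩) hm1.le

lemma diff_bound (n : ℕ) (hn : 1 ≤ n) {t : ℝ} (ht : t ∈ Set.Icc (0:ℝ) 2) :
    |mLim t - mSeq n t| ≤ 1/(n:ℝ) := by
  obtain ⟨h0, h2⟩ := ht
  have hn' : (1:ℝ) ≤ (n:ℝ) := by exact_mod_cast hn
  have hp : (0:ℝ) < (n:ℝ) := by linarith
  have hinv : (0:ℝ) < 1/(n:ℝ) := by positivity
  have e : (1/(n:ℝ)) * n = 1 := by field_simp
  unfold mSeq mLim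
  split_ifs with h1 h h
  · rw [sub_self, abs_zero]; positivity
  · -- t ≤ 1, ¬(t ≤ 1 - 1/n)
    push_neg at h
    have key : (n:ℝ)*(1-t) ≤ 1 := by nlinarith [mul_lt_mul_of_pos_left h hp]
    have hub : 1 - t ≤ 1/(n:ℝ) := by rw [le_div_iff₀ hp]; nlinarith
    have hsub : (2-t)/((n:ℝ)+1) ≤ 1/(n:ℝ) := by
      rw [div_le_div_iff₀ (by linarith) hp]; nlinarith
    have hslb : (0:ℝ) ≤ (2-t)/((n:ℝ)+1) := div_nonneg (by linarith) (by linarith)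
    rw [abs_le]; constructor <;> linarith
  · -- ¬(t ≤ 1), t ≤ 1 - 1/n : impossible
    exfalso; push_neg at h1; linarith
  · -- ¬(t ≤ 1), ¬(t ≤ 1 - 1/n)
    push_neg at h1 h
    have hsub : (2-t)/((n:ℝ)+1) ≤ 1/(n:ℝ) := by
      rw [div_le_div_iff₀ (by linarith) hp]; nlinarith
    have hslb : (0:ℝ) ≤ (2-t)/((n:ℝ)+1) := div_nonneg (by linarith) (by linarith)
    rw [abs_le]; constructor <;> linarith

lemma mSeq_set_eq (n : ℕ) (hn : 1 ≤ n) :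
    {t : ℝ | t ∈ Set.Icc 0 2 ∧ runMin (mSeq n) t ≤ 0} = {(2:ℝ)} := by
  ext t
  simp only [Set.mem_setOf_eq, Set.mem_singleton_iff, Set.mem_Icc]
  constructor
  · rintro ⟨⟨h0, h2⟩, hr⟩
    by_contra hne
    exact absurd hr (not_le.2 (runMin_mSeq_pos n hn h0 (lt_of_le_of_ne h2 hne)))
  · rintro rfl
    exact ⟨⟨by norm_num, le_rfl⟩, runMin_mSeq_two n hn⟩

lemma mLim_set_eq :
    {t : ℝ | t ∈ Set.Icc 0 2 ∧ runMin mLim t ≤ 0} = Set.Icc (1:ℝ) 2 := by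
  ext t
  simp only [Set.mem_setOf_eq, Set.mem_Icc]
  constructor
  · rintro ⟨⟨h0, h2⟩, hr⟩
    refine ⟨?_, h2⟩
    by_contra hlt
    push_neg at hlt
    exact absurd hr (not_le.2 (runMin_mLim_pos h0 hlt))
  · rintro ⟨h1, h2⟩
    exact ⟨⟨by linarith, h2⟩, runMin_mLim_le h1⟩

/-- Counterexample with constant (not strictly increasing) threshold `ζ ≡ 0` on `[0,2]`:
each `mᶰ` is continuous and non-increasing on `[0,2]`, `mᶰ → m` uniformly on `[0,2]`,
yet `τ̄(mᶰ) = 2` for all `n ≥ 1` while `τ̄(m) = 1`: the endogenous burst time functional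
is not sequentially continuous for uniform convergence. -/
theorem stmt3 :
    (∀ n : ℕ, 1 ≤ n → ContinuousOn (mSeq n) (Set.Icc 0 2)) ∧
    (∀ n : ℕ, 1 ≤ n → AntitoneOn (mSeq n) (Set.Icc 0 2)) ∧
    TendstoUniformlyOn mSeq mLim Filter.atTop (Set.Icc 0 2) ∧
    (∀ n : ℕ, 1 ≤ n → burstTime0 (mSeq n) = 2) ∧
    burstTime0 mLim = 1 := by
  refine ⟨?_, ?_, ?_, ?_, ?_⟩
  · intro n hn
    have : mSeq n = fun t => max (1 - t) ((2 - t) / ((n : ℝ) + 1)) :=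
      funext (mSeq_eq_max n hn)
    rw [this]
    exact ((continuous_const.sub continuous_id).max
      ((continuous_const.sub continuous_id).div_const _)).continuousOn
  · intro n hn a _ b _ hab
    rw [mSeq_eq_max n hn, mSeq_eq_max n hn]
    have hp1 : (0:ℝ) < (n:ℝ) + 1 := by positivity
    refine max_le_max (by linarith) ?_
    gcongr
  · rw [Metric.tendstoUniformlyOn_iff]
    intro ε hε
    obtain ⟨N, hN⟩ := exists_nat_one_div_lt hε
    rw [Filter.eventually_atTop]
    refine ⟨N + 1, fun m hm x hx => ?_⟩
    have hm1 : 1 ≤ m := le_trans (Nat.le_add_left 1 N) hm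
    have hmc : ((N:ℝ) + 1) ≤ (m:ℝ) := by exact_mod_cast hm
    have h1 : (1:ℝ)/(m:ℝ) ≤ 1/((N:ℝ)+1) :=
      one_div_le_one_div_of_le (by positivity) hmc
    rw [Real.dist_eq]
    calc |mLim x - mSeq m x| ≤ 1/(m:ℝ) := diff_bound m hm1 hx
      _ ≤ 1/((N:ℝ)+1) := h1
      _ < ε := by exact_mod_cast hN
  · intro n hn
    unfold burstTime0
    rw [mSeq_set_eq n hn, if_pos (Set.singleton_nonempty _), csInf_singleton, min_self]
  · unfold burstTime0
    rw [mLim_set_eq, if_pos (Set.nonempty_Icc.2 one_le_two), csInf_Icc one_le_two,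
      min_eq_left (by norm_num)]
end
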